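/- Let I = I_{g,(m_1,…,m_n)} ⊆ R. For each k with 0 ≤ k ≤ n−1, let E_k = (e_{j',k'}) be the g×n matrix with e_{j',k'} = d_{k'} − 1 for 1 ≤ j' ≤ g and 1 ≤ k' ≤ k, and e_{j',k'} = 0 otherwise (so E_0 = 0). Then for every j with 1 ≤ j ≤ g, the monomial X^{E_k} · x_{j,k+1}^{d_{k+1}} lies in I. -/

import Mathlib

open MvPolynomial Finset

noncomputable section

namespace Paper

open scoped Classical

variable (K : Type) [Field K] (g n : ℕ) (m : Fin n → ℕ)

/-- `d k = m_k + m_{k+1} + ⋯ + m_n + 1` (with `k` zero-indexed). -/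
def dd (k : Fin n) : ℕ := (∑ k' ∈ Finset.Ici k, m k') + 1

/-- `M k`: equals `m k` for the last index and `m k - 1` otherwise. -/
def MM (k : Fin n) : ℕ := if k.val = n - 1 then m k else m k - 1

/-- The membership predicate for the set `𝒜_k` (for `0 ≤ k ≤ n`):
columns (zero-indexed) `< k` have entries bounded by `M` and column sum `m`,
and all later columns vanish. -/
def mem𝒜 (k : ℕ) (A : Fin g → Fin n → ℕ) : Prop :=
  ∀ k' : Fin n,
    (k'.val < k → (∀ j, A j k' ≤ MM n m k') ∧ (∑ j, A j k' = m k')) ∧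
    (k ≤ k'.val → ∀ j, A j k' = 0)

/-- The (finite) set `𝒜_k` of admissible `g × n` matrices. -/
def 𝒜 (k : ℕ) : Finset (Fin g → Fin n → ℕ) :=
  (Fintype.piFinset fun _ : Fin g => Fintype.piFinset fun k' : Fin n =>
      Finset.range (m k' + 1)).filter (mem𝒜 g n m k)

/-- The variables of the ring `R`: the `x_{j,k}` and one `y_A` for each `A ∈ 𝒜_n`. -/
def Var : Type := (Fin g × Fin n) ⊕ {A : Fin g → Fin n → ℕ // A ∈ 𝒜 g n m n}

/-- The variable `x_{j,k}`. -/
def xv (j : Fin g) (k : Fin n) : MvPolynomial (Var g n m) K := X (Sum.inl (j, k))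

/-- The variable `y_A` for `A ∈ 𝒜_n`. -/
def yv (B : {A : Fin g → Fin n → ℕ // A ∈ 𝒜 g n m n}) : MvPolynomial (Var g n m) K :=
  X (Sum.inr B)

/-- The monomial `X^A = ∏_{j,k} x_{j,k}^{A j k}`. -/
def Xpow (A : Fin g → Fin n → ℕ) : MvPolynomial (Var g n m) K :=
  ∏ j : Fin g, ∏ k : Fin n, xv K g n m j k ^ A j k

/-- The polynomial `f`. -/
def ff : MvPolynomial (Var g n m) K :=
  (∑ k : Fin (n - 1), ∑ A ∈ 𝒜 g n m k.val, ∑ j : Fin g,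
      Xpow K g n m A
        * xv K g n m j ⟨k.val, by have := k.isLt; omega⟩ ^ m ⟨k.val, by have := k.isLt; omega⟩
        * xv K g n m j ⟨k.val + 1, by have := k.isLt; omega⟩ ^
            dd n m ⟨k.val + 1, by have := k.isLt; omega⟩)
  + ∑ B : {A : Fin g → Fin n → ℕ // A ∈ 𝒜 g n m n},
      Xpow K g n m B.1 * yv K g n m B

/-- The ideal `I_{g,(m_1,…,m_n)} = (x_{1,1}^d, …, x_{g,1}^d, f)`. -/
def paperIdeal (hn : 0 < n) : Ideal (MvPolynomial (Var g n m) K) :=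
  Ideal.span
    ((Set.range fun j : Fin g => xv K g n m j ⟨0, hn⟩ ^ dd n m ⟨0, hn⟩) ∪ {ff K g n m})

/-!
Induction on `k`. For `k = 0` the monomial is a generator of `I`. For `k = N + 1` choose
`A ∈ 𝒜_N` (possible as `g ≥ 2` and `m_i ≥ 2` for `i < N`) and multiply `f` by `X^W`, where
`W = E_{N+1} - A - m_N e_{j,N}`. The term of `X^W f` indexed by `(N, A, j)` is exactly
`X^{E_{N+1}} x_{j,N+1}^{d_{N+1}}`, and every other term, as well as every `X^W X^B y_B`, is divisible
by some `X^{E_k} x_{j',k}^{d_k}` with `k ≤ N`. Indeed, at the first column where its matrix differs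
from `A`, equal column sums force an entry above that of `A`, which completes `d_k - 1` to `d_k`.
If there is no such column, the missing power comes from the factor `x_{j',κ}^{m_κ}` of the term,
or, for `κ > N` and for the `y`-terms, from a nonzero entry of column `N` outside row `j`, which
exists because the entries of that column are at most `M_N = m_N - 1` and sum to `m_N`.
-/

theorem mem_of_sum_mem_of_forall_ne {R ι : Type*} [CommRing R] {I : Ideal R} {s : Finset ι}
    {f : ι → R} {i : ι} (hi : i ∈ s) (hsum : ∑ i' ∈ s, f i' ∈ I)
    (hother : ∀ i' ∈ s, i' ≠ i → f i' ∈ I) : f i ∈ I := by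
  rw [← add_sum_erase s f hi] at hsum
  exact (I.add_mem_iff_left (I.sum_mem fun i' hi' =>
    hother i' (mem_of_mem_erase hi') (ne_of_mem_erase hi'))).1 hsum

theorem mem_of_sum₃_mem_of_forall_ne {R α β γ : Type*} [CommRing R] [Fintype α] [Fintype γ]
    {I : Ideal R} {s : α → Finset β} {f : α → β → γ → R} {a : α} {b : β} {c : γ}
    (hb : b ∈ s a) (hsum : ∑ a', ∑ b' ∈ s a', ∑ c', f a' b' c' ∈ I)
    (hother : ∀ a', ∀ b' ∈ s a', ∀ c', ¬(a' = a ∧ b' = b ∧ c' = c) → f a' b' c' ∈ I) :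
    f a b c ∈ I := by
  refine mem_of_sum_mem_of_forall_ne (mem_univ c) (mem_of_sum_mem_of_forall_ne
    (f := fun b' => ∑ c', f a b' c') hb (mem_of_sum_mem_of_forall_ne
      (f := fun a' => ∑ b' ∈ s a', ∑ c', f a' b' c') (mem_univ a) hsum ?_) ?_) ?_
  · exact fun a' _ ha' => I.sum_mem fun b' hb' => I.sum_mem fun c' _ =>
      hother a' b' hb' c' fun h => ha' h.1
  · exact fun b' hb' hb'b => I.sum_mem fun c' _ => hother a b' hb' c' fun h => hb'b h.2.1
  · exact fun c' _ hc' => hother a b hb c' fun h => hc' h.2.2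

def E (k : ℕ) : Fin g → Fin n → ℕ := fun _ k' => if k'.val < k then dd n m k' - 1 else 0

def Eplus (k : Fin n) (j : Fin g) : Fin g → Fin n → ℕ :=
  E g n m k.val + Pi.single j (Pi.single k (dd n m k))

-- Exponent matrices are ordered entrywise, so `A ≤ B` means `X^A ∣ X^B`.
def Covered (N : ℕ) (F : Fin g → Fin n → ℕ) : Prop :=
  ∃ k : Fin n, k.val ≤ N ∧ ∃ j, Eplus g n m k j ≤ F

def cofactor (N : Fin n) (A : Fin g → Fin n → ℕ) (j : Fin g) : Fin g → Fin n → ℕ :=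
  E g n m (N.val + 1) - (A + Pi.single j (Pi.single N (m N)))

section

variable {K g n m}

theorem single_single_apply (j j' : Fin g) (k k' : Fin n) (a : ℕ) :
    (Pi.single j (Pi.single k a) : Fin g → Fin n → ℕ) j' k' = if j' = j ∧ k' = k then a else 0 := by
  by_cases hj : j' = j <;> by_cases hk : k' = k <;> simp [hj, hk]

theorem Xpow_add (A B : Fin g → Fin n → ℕ) :
    Xpow K g n m (A + B) = Xpow K g n m A * Xpow K g n m B := by
  simp only [Xpow, Pi.add_apply, pow_add, prod_mul_distrib]

theorem Xpow_single (j : Fin g) (k : Fin n) (a : ℕ) :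
    Xpow K g n m (Pi.single j (Pi.single k a)) = xv K g n m j k ^ a := by
  rw [Xpow, Fintype.prod_eq_single j fun j' hj' => by simp [hj'],
    Fintype.prod_eq_single k fun k' hk' => by simp [hk']]
  simp

theorem Xpow_Eplus (k : Fin n) (j : Fin g) :
    Xpow K g n m (Eplus g n m k j) = Xpow K g n m (E g n m k) * xv K g n m j k ^ dd n m k := by
  rw [Eplus, Xpow_add, Xpow_single]

theorem Xpow_mem_of_le {I : Ideal (MvPolynomial (Var g n m) K)} {A B : Fin g → Fin n → ℕ}
    (hAB : A ≤ B) (hA : Xpow K g n m A ∈ I) : Xpow K g n m B ∈ I := by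
  rw [← add_tsub_cancel_of_le hAB, Xpow_add]
  exact I.mul_mem_right _ hA

theorem m_lt_dd (k : Fin n) : m k < dd n m k :=
  Nat.lt_succ_of_le (single_le_sum (fun _ _ => Nat.zero_le _) (mem_Ici.2 le_rfl))

theorem Eplus_le {k : Fin n} {j : Fin g} {F : Fin g → Fin n → ℕ}
    (hlt : ∀ j' k', k' < k → dd n m k' - 1 ≤ F j' k') (hk : dd n m k ≤ F j k) :
    Eplus g n m k j ≤ F := by
  intro j' k'
  simp only [Eplus, E, Pi.add_apply, single_single_apply]
  rcases lt_trichotomy k' k with h | rfl | h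
  · simpa [h, h.ne] using hlt j' k' h
  · by_cases hj : j' = j
    · subst hj
      simpa using hk
    · simp [hj]
  · simp [h.ne', not_lt.2 h.le]

theorem Covered.mono {N : ℕ} {F F' : Fin g → Fin n → ℕ} (h : Covered g n m N F) (hF : F ≤ F') :
    Covered g n m N F' :=
  let ⟨k, hk, j, hle⟩ := h
  ⟨k, hk, j, hle.trans hF⟩

theorem Covered.Xpow_mem {I : Ideal (MvPolynomial (Var g n m) K)} {N : ℕ}
    {F : Fin g → Fin n → ℕ} (IH : ∀ k : Fin n, k.val ≤ N → ∀ j, Xpow K g n m (Eplus g n m k j) ∈ I)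
    (h : Covered g n m N F) : Xpow K g n m F ∈ I :=
  let ⟨k, hk, j, hle⟩ := h
  Xpow_mem_of_le hle (IH k hk j)

end

section

variable {g n m}

theorem le_of_mem_𝒜 {κ : ℕ} {A : Fin g → Fin n → ℕ} (hA : A ∈ 𝒜 g n m κ) (j : Fin g) (k : Fin n) :
    A j k ≤ m k :=
  Nat.lt_succ_iff.1 <| mem_range.1 <|
    Fintype.mem_piFinset.1 (Fintype.mem_piFinset.1 (mem_filter.1 hA).1 j) k

theorem sum_col_of_mem_𝒜 {κ : ℕ} {A : Fin g → Fin n → ℕ} (hA : A ∈ 𝒜 g n m κ) {k : Fin n}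
    (hk : k.val < κ) : ∑ j, A j k = m k :=
  (((mem_filter.1 hA).2 k).1 hk).2

theorem eq_zero_of_mem_𝒜 {κ : ℕ} {A : Fin g → Fin n → ℕ} (hA : A ∈ 𝒜 g n m κ) {k : Fin n}
    (hk : κ ≤ k.val) (j : Fin g) : A j k = 0 :=
  ((mem_filter.1 hA).2 k).2 hk j

theorem lt_of_mem_𝒜 {κ : ℕ} {A : Fin g → Fin n → ℕ} (hA : A ∈ 𝒜 g n m κ) {k : Fin n}
    (hk : k.val < κ) (hkn : k.val + 1 < n) (hm : 1 ≤ m k) (j : Fin g) : A j k < m k := by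
  have h := (((mem_filter.1 hA).2 k).1 hk).1 j
  rw [MM, if_neg (by omega)] at h
  omega

theorem 𝒜_nonempty (hg : 2 ≤ g) (hm2 : ∀ i : Fin n, i.val + 2 < n → 2 ≤ m i) {N : ℕ}
    (hN : N + 1 < n) : (𝒜 g n m N).Nonempty := by
  let j₀ : Fin g := ⟨0, by omega⟩
  let j₁ : Fin g := ⟨1, by omega⟩
  have hj : j₀ ≠ j₁ := by simp [j₀, j₁, Fin.ext_iff]
  refine ⟨fun j k => if k.val < N then (if j = j₀ then m k - 1 else if j = j₁ then 1 else 0)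
    else 0, mem_filter.2 ⟨?_, fun k => ⟨fun hk => ⟨fun j => ?_, ?_⟩, fun hk j => if_neg (by omega)⟩⟩⟩
  · refine Fintype.mem_piFinset.2 fun j => Fintype.mem_piFinset.2 fun k => mem_range.2 ?_
    by_cases hk : k.val < N
    · have := hm2 k (by omega)
      simp only [hk, if_true]
      split_ifs <;> omega
    · simp [hk]
  · have := hm2 k (by omega)
    rw [MM, if_neg (by omega)]
    dsimp only
    split_ifs <;> omega
  · have := hm2 k (by omega)
    rw [Fintype.sum_eq_add j₀ j₁ hj fun j h => by simp [hk, h.1, h.2]]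
    simp [hk, hj.symm]
    omega

end

section Cofactor

variable {g n m} {N : Fin n} {A : Fin g → Fin n → ℕ}

theorem add_single_le_E_succ (hA : A ∈ 𝒜 g n m N.val) (j : Fin g) :
    A + Pi.single j (Pi.single N (m N)) ≤ E g n m (N.val + 1) := by
  intro j' k'
  have hAm := le_of_mem_𝒜 hA j' k'
  have hmd := m_lt_dd (m := m) k'
  simp only [Pi.add_apply, single_single_apply, E]
  rcases lt_trichotomy k'.val N.val with h | h | h
  · rw [if_neg fun h' => h.ne (congrArg Fin.val h'.2), if_pos (by omega)]
    omega
  · obtain rfl : k' = N := Fin.ext h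
    rw [eq_zero_of_mem_𝒜 hA le_rfl]
    split_ifs <;> omega
  · rw [eq_zero_of_mem_𝒜 hA h.le, if_neg fun h' => h.ne' (congrArg Fin.val h'.2),
      if_neg (by omega)]

theorem cofactor_add_of_lt (hA : A ∈ 𝒜 g n m N.val) (j j' : Fin g) {k : Fin n}
    (hk : k.val < N.val) : cofactor g n m N A j j' k + A j' k = dd n m k - 1 := by
  have hle := add_single_le_E_succ hA j j' k
  have hkN : k ≠ N := fun h => hk.ne (congrArg Fin.val h)
  simp only [cofactor, Pi.sub_apply, Pi.add_apply, single_single_apply, E, hkN, and_false,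
    if_false, add_zero, if_pos (show k.val < N.val + 1 by omega)] at hle ⊢
  omega

theorem cofactor_of_ne (hA : A ∈ 𝒜 g n m N.val) {j j' : Fin g} (hj : j' ≠ j) :
    cofactor g n m N A j j' N = dd n m N - 1 := by
  simp [cofactor, E, eq_zero_of_mem_𝒜 hA le_rfl, hj]

theorem cofactor_add_term (hA : A ∈ 𝒜 g n m N.val) (j : Fin g) (hN : N.val + 1 < n) :
    cofactor g n m N A j + A + Pi.single j (Pi.single N (m N))
        + Pi.single j (Pi.single ⟨N.val + 1, hN⟩ (dd n m ⟨N.val + 1, hN⟩))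
      = Eplus g n m ⟨N.val + 1, hN⟩ j := by
  rw [add_assoc _ A, cofactor, tsub_add_cancel_of_le (add_single_le_E_succ hA j)]
  rfl

end Cofactor

section Covering

variable {g n m} {N : Fin n} {A : Fin g → Fin n → ℕ} {j : Fin g}

theorem covered_or_agree (hA : A ∈ 𝒜 g n m N.val) {κ : ℕ} {B : Fin g → Fin n → ℕ}
    (hB : B ∈ 𝒜 g n m κ) :
    Covered g n m N.val (cofactor g n m N A j + B) ∨
      ∀ k : Fin n, k < N → k.val < κ → ∀ j', B j' k = A j' k := by
  by_cases hdiff : ∃ t : Fin n, t < N ∧ t.val < κ ∧ ∃ j', B j' t ≠ A j' t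
  swap
  · push Not at hdiff
    exact Or.inr hdiff
  left
  obtain ⟨t, ⟨htN, htκ, hne⟩, hmin⟩ := wellFounded_lt.has_min _ hdiff
  have hbelow : ∀ k < t, ∀ j', B j' k = A j' k := fun k hk j' => by
    by_contra h
    exact hmin k ⟨hk.trans htN, by omega, j', h⟩ hk
  -- the column sums of `A` and `B` at `t` are both `m t`
  obtain ⟨j₀, hj₀⟩ : ∃ j₀, A j₀ t < B j₀ t := by
    by_contra! hle
    obtain ⟨j', hj'⟩ := hne
    have hsum : ∑ j', B j' t = ∑ j', A j' t := by
      rw [sum_col_of_mem_𝒜 hB htκ, sum_col_of_mem_𝒜 hA htN]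
    exact hj' ((sum_eq_sum_iff_of_le fun j' _ => hle j').1 hsum j' (mem_univ _))
  refine ⟨t, htN.le, j₀, Eplus_le (fun j' k hk => ?_) ?_⟩
  · simp only [Pi.add_apply]
    rw [hbelow k hk j', cofactor_add_of_lt hA j j' (hk.trans htN)]
  · have := cofactor_add_of_lt hA j j₀ htN
    have := m_lt_dd (m := m) t
    simp only [Pi.add_apply]
    omega

theorem covered_of_lt (hA : A ∈ 𝒜 g n m N.val) (hpos : ∀ i : Fin n, i.val + 1 < n → 1 ≤ m i)
    {κ : Fin n} (hκ : κ < N) {B : Fin g → Fin n → ℕ} (hB : B ∈ 𝒜 g n m κ.val)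
    (hagree : ∀ k < κ, ∀ j', B j' k = A j' k) (j' : Fin g) :
    Covered g n m N.val (cofactor g n m N A j + B + Pi.single j' (Pi.single κ (m κ))) := by
  refine ⟨κ, hκ.le, j', Eplus_le (fun j'' k hk => ?_) ?_⟩
  · have := cofactor_add_of_lt hA j j'' (hk.trans hκ)
    simp only [Pi.add_apply, hagree k hk j'']
    omega
  · have h1 := cofactor_add_of_lt hA j j' hκ
    have h2 := lt_of_mem_𝒜 hA hκ (by omega) (hpos κ (by omega)) j'
    simp only [Pi.add_apply, eq_zero_of_mem_𝒜 hB le_rfl, single_single_apply, and_self, if_true]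
    omega

theorem covered_of_ne_of_eq (hA : A ∈ 𝒜 g n m N.val) (hpos : ∀ i : Fin n, i.val + 1 < n → 1 ≤ m i)
    (hN : N.val + 1 < n) {j' : Fin g} (hj' : j' ≠ j) :
    Covered g n m N.val (cofactor g n m N A j + A + Pi.single j' (Pi.single N (m N))) := by
  refine ⟨N, le_rfl, j', Eplus_le (fun j'' k hk => ?_) ?_⟩
  · have := cofactor_add_of_lt hA j j'' hk
    simp only [Pi.add_apply]
    omega
  · have := hpos N hN
    simp only [Pi.add_apply, cofactor_of_ne hA hj', eq_zero_of_mem_𝒜 hA le_rfl,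
      single_single_apply, and_self, if_true]
    omega

theorem covered_of_gt (hA : A ∈ 𝒜 g n m N.val) (hpos : ∀ i : Fin n, i.val + 1 < n → 1 ≤ m i)
    (hN : N.val + 1 < n) {κ : ℕ} (hκ : N.val < κ) {B : Fin g → Fin n → ℕ} (hB : B ∈ 𝒜 g n m κ)
    (hagree : ∀ k < N, ∀ j', B j' k = A j' k) :
    Covered g n m N.val (cofactor g n m N A j + B) := by
  -- column `N` of `B` sums to `m N` but `B j N < m N`, so it has a nonzero entry off row `j`
  obtain ⟨j₀, hj₀, hB₀⟩ : ∃ j₀ ∈ univ.erase j, B j₀ N ≠ 0 := by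
    refine exists_ne_zero_of_sum_ne_zero ?_
    have hsplit := add_sum_erase univ (fun j' => B j' N) (mem_univ j)
    have hlt := lt_of_mem_𝒜 hB hκ hN (hpos N hN) j
    rw [sum_col_of_mem_𝒜 hB hκ] at hsplit
    omega
  refine ⟨N, le_rfl, j₀, Eplus_le (fun j'' k hk => ?_) ?_⟩
  · have := cofactor_add_of_lt hA j j'' hk
    simp only [Pi.add_apply, hagree k hk]
    omega
  · have := m_lt_dd (m := m) N
    simp only [Pi.add_apply, cofactor_of_ne hA (ne_of_mem_erase hj₀)]
    omega

theorem covered_of_ne (hA : A ∈ 𝒜 g n m N.val) (hpos : ∀ i : Fin n, i.val + 1 < n → 1 ≤ m i)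
    (hN : N.val + 1 < n) {κ : Fin n} {B : Fin g → Fin n → ℕ} (hB : B ∈ 𝒜 g n m κ.val)
    {j' : Fin g} (hne : ¬(κ = N ∧ B = A ∧ j' = j)) :
    Covered g n m N.val (cofactor g n m N A j + B + Pi.single j' (Pi.single κ (m κ))) := by
  rcases covered_or_agree hA hB with hcov | hagree
  · exact hcov.mono le_self_add
  rcases lt_trichotomy κ N with hlt | rfl | hgt
  · exact covered_of_lt hA hpos hlt hB (fun k hk => hagree k (hk.trans hlt) hk) j'
  · obtain rfl : B = A := funext fun j'' => funext fun k => by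
      by_cases hk : k < κ
      · exact hagree k hk hk j''
      · rw [eq_zero_of_mem_𝒜 hB (not_lt.1 hk), eq_zero_of_mem_𝒜 hA (not_lt.1 hk)]
    exact covered_of_ne_of_eq hA hpos hN fun h => hne ⟨rfl, rfl, h⟩
  · exact (covered_of_gt hA hpos hN hgt hB fun k hk => hagree k hk (hk.trans hgt)).mono le_self_add

theorem covered_of_mem_𝒜_n (hA : A ∈ 𝒜 g n m N.val)
    (hpos : ∀ i : Fin n, i.val + 1 < n → 1 ≤ m i) (hN : N.val + 1 < n)
    {B : Fin g → Fin n → ℕ} (hB : B ∈ 𝒜 g n m n) :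
    Covered g n m N.val (cofactor g n m N A j + B) :=
  (covered_or_agree hA hB).elim id fun hagree =>
    covered_of_gt hA hpos hN N.isLt hB fun k hk => hagree k hk k.isLt

end Covering

section

variable {K g n m}

theorem Xpow_mul_term (W A : Fin g → Fin n → ℕ) (j : Fin g) (k k' : Fin n) (a b : ℕ) :
    Xpow K g n m W * (Xpow K g n m A * xv K g n m j k ^ a * xv K g n m j k' ^ b)
      = Xpow K g n m (W + A + Pi.single j (Pi.single k a) + Pi.single j (Pi.single k' b)) := by
  simp only [Xpow_add, Xpow_single]
  ring

theorem Xpow_Eplus_succ_mem (hn : 0 < n) (hg : 2 ≤ g) (hm2 : ∀ i : Fin n, i.val + 2 < n → 2 ≤ m i)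
    (hpos : ∀ i : Fin n, i.val + 1 < n → 1 ≤ m i) {N : ℕ} (hN : N + 1 < n)
    (IH : ∀ k : Fin n, k.val ≤ N → ∀ j,
      Xpow K g n m (Eplus g n m k j) ∈ paperIdeal K g n m hn) (j : Fin g) :
    Xpow K g n m (Eplus g n m ⟨N + 1, hN⟩ j) ∈ paperIdeal K g n m hn := by
  obtain ⟨A, hA⟩ := 𝒜_nonempty hg hm2 hN
  set I := paperIdeal K g n m hn
  let N' : Fin n := ⟨N, by omega⟩
  have hAN : A ∈ 𝒜 g n m N'.val := hA
  set w := Xpow K g n m (cofactor g n m N' A j)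
  have hwf : w * ff K g n m ∈ I := I.mul_mem_left _ (Ideal.subset_span (Or.inr rfl))
  have hwy : w * ∑ B : {A // A ∈ 𝒜 g n m n}, Xpow K g n m B.1 * yv K g n m B ∈ I := by
    rw [mul_sum]
    refine I.sum_mem fun B _ => ?_
    rw [← mul_assoc, ← Xpow_add]
    exact I.mul_mem_right _ ((covered_of_mem_𝒜_n hAN hpos hN B.2).Xpow_mem IH)
  rw [ff, mul_add, I.add_mem_iff_left hwy] at hwf
  simp only [mul_sum] at hwf
  rw [← cofactor_add_term hAN j hN, ← Xpow_mul_term]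
  refine mem_of_sum₃_mem_of_forall_ne (a := (⟨N, by omega⟩ : Fin (n - 1))) hA hwf ?_
  intro κ B hB j' hne
  rw [Xpow_mul_term]
  have hne' : ¬(⟨κ.val, by omega⟩ = N' ∧ B = A ∧ j' = j) := fun h =>
    hne ⟨Fin.ext (Fin.mk.inj_iff.1 h.1), h.2⟩
  exact ((covered_of_ne hAN hpos hN hB hne').mono le_self_add).Xpow_mem IH

end

/-- the key Lemma.  For `0 ≤ k ≤ n - 1` (zero-indexed: `k : Fin n`),
let `E_k` be the `g × n` matrix whose first `k` columns (zero-indexed: columns `k' < k`)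
have all entries equal to `d_{k'} - 1`, and whose other entries vanish.  Then
`X^{E_k} · x_{j,k+1}^{d_{k+1}}` (zero-indexed: `X^{E_k} · x_{j,k}^{d_k}`) lies in
`I_{g,(m_1,…,m_n)}` for every `j`. -/
theorem statement0 (hg : 2 ≤ g) (hn : 0 < n)
    (hm2 : ∀ i : Fin n, i.val + 2 < n → 2 ≤ m i)
    (hm1 : ∀ i : Fin n, i.val + 2 = n → 1 ≤ m i)
    (k : Fin n) (j : Fin g) :
    Xpow K g n m (fun _ k' => if k'.val < k.val then dd n m k' - 1 else 0)
        * xv K g n m j k ^ dd n m k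
      ∈ paperIdeal K g n m hn := by
  have hpos : ∀ i : Fin n, i.val + 1 < n → 1 ≤ m i := fun i hi =>
    (Nat.lt_or_ge (i.val + 2) n).elim (fun h => one_le_two.trans (hm2 i h)) fun h =>
      hm1 i (by omega)
  suffices ∀ N (k : Fin n), k.val = N → ∀ j,
      Xpow K g n m (Eplus g n m k j) ∈ paperIdeal K g n m hn by
    have h := this k.val k rfl j
    rwa [Xpow_Eplus] at h
  intro N
  induction N using Nat.strong_induction_on with
  | _ N IH =>
    rintro ⟨_ | N, hk⟩ rfl j
    · have hgen : xv K g n m j ⟨0, hn⟩ ^ dd n m ⟨0, hn⟩ ∈ paperIdeal K g n m hn :=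
        Ideal.subset_span (Or.inl ⟨j, rfl⟩)
      have hE : E g n m 0 = 0 := funext fun _ => funext fun _ => if_neg (Nat.not_lt_zero _)
      rwa [Xpow_Eplus, hE, show Xpow K g n m 0 = 1 by simp [Xpow], one_mul]
    · exact Xpow_Eplus_succ_mem hn hg hm2 hpos hk
        (fun k' hk' j' => IH k'.val (Nat.lt_succ_of_le hk') k' rfl j') j

end Paper
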